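/- Let D ⊊ ℝⁿ be a bounded domain with diameter d, and let x, y ∈ D with y ∈ B(x, δ(x)) and d·|x−y| < η(x). Then log(1 + d·|x−y|/(η(x) + d·|x−y|)) ≤ ζ_D(x,y) ≤ log(1 + d·|x−y|/(η(x) − d·|x−y|)). Consequently, lim_{y→x} ζ_D(x,y)/|x−y| = d/η(x). -/

import Mathlib

/-!
Since `B(z, δ(z))` lies in `D`, we have `0 < δ ≤ d / 2` on `D`; as `δ` is `1`-Lipschitz,
`η = δ (d - δ)` is then positive and `d`-Lipschitz on `D`. This traps `min (η x) (η y)`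
between `η x - d |x - y|` and `η x`, which gives the two-sided bound by monotonicity of `log`,
and the limit follows from `log (1 + u) ~ u` as `u → 0`.
-/

noncomputable def deltaD {n : ℕ} (D : Set (EuclideanSpace ℝ (Fin n)))
    (z : EuclideanSpace ℝ (Fin n)) : ℝ :=
  Metric.infDist z (frontier D)

noncomputable def etaD {n : ℕ} (D : Set (EuclideanSpace ℝ (Fin n)))
    (z : EuclideanSpace ℝ (Fin n)) : ℝ :=
  deltaD D z * (Metric.diam D - deltaD D z)

noncomputable def zetaD {n : ℕ} (D : Set (EuclideanSpace ℝ (Fin n)))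
    (x y : EuclideanSpace ℝ (Fin n)) : ℝ :=
  Real.log (1 + Metric.diam D * dist x y / min (etaD D x) (etaD D y))

noncomputable def zetaD' {n : ℕ} (D : Set (EuclideanSpace ℝ (Fin n)))
    (x y : EuclideanSpace ℝ (Fin n)) : ℝ :=
  (1 / 2) * Real.log ((1 + Metric.diam D * dist x y / etaD D x) *
    (1 + Metric.diam D * dist x y / etaD D y))

open Metric Filter Set Topology

section NormedSpace

variable {E : Type*} [NormedAddCommGroup E] [NormedSpace ℝ E] {D : Set E} {z : E}

/-- The ball is preconnected and misses `frontier D`, so it cannot leave the open set `D`. -/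
theorem ball_infDist_frontier_subset (hD : IsOpen D) (hz : z ∈ D) :
    ball z (infDist z (frontier D)) ⊆ D := by
  rcases (ball z (infDist z (frontier D))).eq_empty_or_nonempty with hempty | hne
  · simp [hempty]
  refine (convex_ball z _).isPreconnected.subset_of_closure_inter_subset hD
    ⟨z, mem_ball_self (nonempty_ball.1 hne), hz⟩ ?_
  rintro w ⟨hwD, hwball⟩
  by_contra hw
  have hfront : w ∈ frontier D := ⟨hwD, by rwa [hD.interior_eq]⟩
  exact (infDist_le_dist_of_mem hfront).not_gt (mem_ball'.1 hwball)

theorem infDist_frontier_pos (hD : IsOpen D) (hproper : D ≠ univ) (hz : z ∈ D) :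
    0 < infDist z (frontier D) :=
  (isClosed_frontier.notMem_iff_infDist_pos (nonempty_frontier_iff.2 ⟨⟨z, hz⟩, hproper⟩)).1
    fun h => h.2 (by rwa [hD.interior_eq])

theorem two_mul_infDist_frontier_le_diam (hD : IsOpen D) (hbdd : Bornology.IsBounded D)
    (hproper : D ≠ univ) (hz : z ∈ D) : 2 * infDist z (frontier D) ≤ diam D := by
  obtain ⟨w, hw⟩ := nonempty_compl.2 hproper
  have : Nontrivial E := nontrivial_of_ne z w fun h => hw (h ▸ hz)
  rw [← diam_ball_eq z infDist_nonneg]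
  exact diam_mono (ball_infDist_frontier_subset hD hz) hbdd

end NormedSpace

theorem abs_mul_sub_sub_mul_sub_le {a b d : ℝ} (ha : a ∈ Icc 0 d) (hb : b ∈ Icc 0 d) :
    |a * (d - a) - b * (d - b)| ≤ d * |a - b| := by
  rw [show a * (d - a) - b * (d - b) = (a - b) * (d - a - b) by ring, abs_mul, mul_comm]
  gcongr
  exact abs_le.2 ⟨by linarith [ha.2, hb.2], by linarith [ha.1, hb.1]⟩

theorem log_one_add_div_le_and_le {t e m : ℝ} (ht : 0 ≤ t) (hte : t < e)
    (hm : e - t ≤ m) (hm' : m ≤ e + t) :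
    Real.log (1 + t / (e + t)) ≤ Real.log (1 + t / m) ∧
      Real.log (1 + t / m) ≤ Real.log (1 + t / (e - t)) := by
  have hm₀ : 0 < m := by linarith
  have hlog_pos : ∀ {c : ℝ}, 0 < c → 0 < 1 + t / c := fun hc =>
    add_pos_of_pos_of_nonneg one_pos (div_nonneg ht hc.le)
  exact ⟨Real.log_le_log (hlog_pos (by linarith)) (by gcongr),
    Real.log_le_log (hlog_pos hm₀) (by gcongr)⟩

theorem tendsto_log_one_add_div_self :
    Tendsto (fun u : ℝ => Real.log (1 + u) / u) (𝓝[≠] 0) (𝓝 1) := by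
  have hder : HasDerivAt (fun u : ℝ => Real.log (1 + u)) 1 0 := by
    simpa using ((hasDerivAt_id (0 : ℝ)).const_add 1).log (by norm_num)
  refine (hasDerivAt_iff_tendsto_slope.1 hder).congr fun u => ?_
  simp [slope_def_field]

theorem tendsto_log_one_add_mul_div_div {X : Type*} {l : Filter X} {r m : X → ℝ} {d e : ℝ}
    (hd : d ≠ 0) (he : e ≠ 0) (hr : Tendsto r l (𝓝[≠] 0)) (hm : Tendsto m l (𝓝 e)) :
    Tendsto (fun y => Real.log (1 + d * r y / m y) / r y) l (𝓝 (d / e)) := by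
  have hm₀ : ∀ᶠ y in l, m y ≠ 0 := hm.eventually_ne he
  have hr₀ : ∀ᶠ y in l, r y ≠ 0 := hr.eventually self_mem_nhdsWithin
  have hg : Tendsto (fun y => d * r y / m y) l (𝓝[≠] 0) := by
    refine tendsto_nhdsWithin_iff.2 ⟨?_, ?_⟩
    · simpa only [mul_zero, zero_div, Pi.div_def] using
        ((tendsto_nhds_of_tendsto_nhdsWithin hr).const_mul d).div hm he
    · filter_upwards [hm₀, hr₀] with y h₁ h₂
      exact div_ne_zero (mul_ne_zero hd h₂) h₁
  have hlim := (tendsto_log_one_add_div_self.comp hg).mul ((tendsto_const_nhds (x := d)).div hm he)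
  rw [one_mul] at hlim
  refine hlim.congr' ?_
  filter_upwards [hm₀, hr₀] with y h₁ h₂
  simp only [Function.comp_apply, Pi.div_apply]
  field_simp

section Domain

variable {n : ℕ} {D : Set (EuclideanSpace ℝ (Fin n))} {x y : EuclideanSpace ℝ (Fin n)}

theorem deltaD_mem_Icc (hopen : IsOpen D) (hproper : D ≠ univ) (hbdd : Bornology.IsBounded D)
    (hx : x ∈ D) : deltaD D x ∈ Icc 0 (diam D) := by
  have hδ : 0 ≤ deltaD D x := infDist_nonneg
  have h2δ : 2 * deltaD D x ≤ diam D := two_mul_infDist_frontier_le_diam hopen hbdd hproper hx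
  exact ⟨hδ, by linarith⟩

theorem etaD_pos (hopen : IsOpen D) (hproper : D ≠ univ) (hbdd : Bornology.IsBounded D)
    (hx : x ∈ D) : 0 < etaD D x := by
  have hδ : 0 < deltaD D x := infDist_frontier_pos hopen hproper hx
  have h2δ : 2 * deltaD D x ≤ diam D := two_mul_infDist_frontier_le_diam hopen hbdd hproper hx
  exact mul_pos hδ (by linarith)

theorem abs_etaD_sub_etaD_le (hopen : IsOpen D) (hproper : D ≠ univ)
    (hbdd : Bornology.IsBounded D) (hx : x ∈ D) (hy : y ∈ D) :
    |etaD D x - etaD D y| ≤ diam D * dist x y := by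
  calc |etaD D x - etaD D y|
      ≤ diam D * |deltaD D x - deltaD D y| :=
        abs_mul_sub_sub_mul_sub_le (deltaD_mem_Icc hopen hproper hbdd hx)
          (deltaD_mem_Icc hopen hproper hbdd hy)
    _ ≤ diam D * dist x y := by
        gcongr
        unfold deltaD
        simpa [Real.dist_eq] using (lipschitz_infDist_pt (frontier D)).dist_le_mul x y

theorem continuous_etaD : Continuous (etaD D) :=
  (continuous_infDist_pt _).mul (continuous_const.sub (continuous_infDist_pt _))

end Domain

theorem stmt_19_general {n : ℕ} (D : Set (EuclideanSpace ℝ (Fin n)))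
    (hopen : IsOpen D) (hproper : D ≠ Set.univ)
    (hbdd : Bornology.IsBounded D)
    (x : EuclideanSpace ℝ (Fin n)) (hx : x ∈ D) :
    (∀ y ∈ D, y ∈ Metric.ball x (deltaD D x) →
      Metric.diam D * dist x y < etaD D x →
      Real.log (1 + Metric.diam D * dist x y /
          (etaD D x + Metric.diam D * dist x y)) ≤ zetaD D x y ∧
        zetaD D x y ≤ Real.log (1 + Metric.diam D * dist x y /
          (etaD D x - Metric.diam D * dist x y))) ∧
    Filter.Tendsto (fun y => zetaD D x y / dist x y)
      (nhdsWithin x (D \ {x})) (nhds (Metric.diam D / etaD D x)) := by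
  have hη := etaD_pos hopen hproper hbdd hx
  refine ⟨fun y hy _ hlt => ?_, ?_⟩
  · have hlip := abs_le.1 (abs_etaD_sub_etaD_le hopen hproper hbdd hx hy)
    exact log_one_add_div_le_and_le (by positivity) hlt
      (le_min (by linarith) (by linarith)) ((min_le_left _ _).trans (by linarith))
  · have hd : 0 < diam D := by
      linarith [two_mul_infDist_frontier_le_diam hopen hbdd hproper hx,
        infDist_frontier_pos hopen hproper hx]
    have hdist : Tendsto (dist x) (𝓝[D \ {x}] x) (𝓝[≠] 0) := by
      refine tendsto_nhdsWithin_iff.2 ⟨?_, ?_⟩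
      · exact ((continuous_const.dist continuous_id).tendsto' x 0 (dist_self x)).mono_left
          nhdsWithin_le_nhds
      · filter_upwards [self_mem_nhdsWithin] with y hy
        exact dist_ne_zero.2 fun h => hy.2 h.symm
    have hmin :
        Tendsto (fun y => min (etaD D x) (etaD D y)) (𝓝[D \ {x}] x) (𝓝 (etaD D x)) :=
      ((continuous_const.min continuous_etaD).tendsto' x _ (min_self _)).mono_left
        nhdsWithin_le_nhds
    exact tendsto_log_one_add_mul_div_div hd.ne' hη.ne' hdist hmin

theorem stmt_19 {n : ℕ} (hn : 2 ≤ n) (D : Set (EuclideanSpace ℝ (Fin n)))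
    (hopen : IsOpen D) (hconn : IsConnected D) (hproper : D ≠ Set.univ)
    (hbdd : Bornology.IsBounded D)
    (x : EuclideanSpace ℝ (Fin n)) (hx : x ∈ D) :
    (∀ y ∈ D, y ∈ Metric.ball x (deltaD D x) →
      Metric.diam D * dist x y < etaD D x →
      Real.log (1 + Metric.diam D * dist x y /
          (etaD D x + Metric.diam D * dist x y)) ≤ zetaD D x y ∧
        zetaD D x y ≤ Real.log (1 + Metric.diam D * dist x y /
          (etaD D x - Metric.diam D * dist x y))) ∧
    Filter.Tendsto (fun y => zetaD D x y / dist x y)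
      (nhdsWithin x (D \ {x})) (nhds (Metric.diam D / etaD D x)) :=
  stmt_19_general D hopen hproper hbdd x hx
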